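/- Let $P = (p_n)$ and $Q = (q_n)$ be sequences of integers with $p_n, q_n \geq 2$ such that there exists $M$ with $p_n \leq q_n$ for all $n \geq M$. Then $\psi_{P,Q}$ is monotone (in fact increasing) on the interval $\left[ \sum_{n=1}^{M} \frac{p_n - 1}{p_1 \cdots p_n}, \; \sum_{n=1}^{M} \frac{p_n - 1}{p_1 \cdots p_n} + \frac{1}{p_1 \cdots p_{M+1}} \right]$. -/

import Mathlib

noncomputable def cantorDigit (p : ℕ → ℕ) (x : ℝ) (n : ℕ) : ℕ :=
  (⌊(∏ i ∈ Finset.range (n + 1), (p i : ℝ)) * Int.fract x⌋).toNat % p n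

noncomputable def psiPQ (p q : ℕ → ℕ) (x : ℝ) : ℝ :=
  ∑' n : ℕ, (min (cantorDigit p x n) (q n - 1) : ℝ) / ∏ i ∈ Finset.range (n + 1), (q i : ℝ)

/-! On `[1 - 1 / P_M, 1)`, which contains the interval of the statement (its left end is the
telescoping sum `1 - 1 / P_M`), every `x` has the digits `E_n = p_n - 1` for `n < M`. So two points
`x < y` there first differ in a digit `n ≥ M`, where `E_n(x) < E_n(y)` and the truncation by
`q_n - 1` is inactive. Comparing the `Q`-series of the truncated digits, `y` gains at least
`1 / Q_{n+1}` at `n`, while the tail of `x` after `n` stays strictly below the maximal tail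
`∑_{k>n} (q_k - 1) / Q_{k+1} = 1 / Q_{n+1}`, because a `P`-expansion never ends in digits
`p_k - 1 ≤ q_k - 1`. -/

open Finset Filter

noncomputable def cantorProd (q : ℕ → ℕ) (n : ℕ) : ℝ := ∏ i ∈ range n, (q i : ℝ)

section CantorSeries

variable {q : ℕ → ℕ}

lemma cantorProd_succ (q : ℕ → ℕ) (n : ℕ) : cantorProd q (n + 1) = cantorProd q n * q n :=
  prod_range_succ _ _

lemma one_le_cantorProd (hq : ∀ n, 0 < q n) (n : ℕ) : 1 ≤ cantorProd q n :=
  one_le_prod fun i _ => Nat.one_le_cast.mpr (hq i)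

lemma cantorProd_pos (hq : ∀ n, 0 < q n) (n : ℕ) : 0 < cantorProd q n :=
  zero_lt_one.trans_le (one_le_cantorProd hq n)

lemma one_sub_one_div_cantorProd_nonneg (hq : ∀ n, 0 < q n) (n : ℕ) :
    0 ≤ 1 - 1 / cantorProd q n :=
  sub_nonneg.mpr ((div_le_one (cantorProd_pos hq n)).mpr (one_le_cantorProd hq n))

lemma cantorProd_mono (hq : ∀ n, 0 < q n) : Monotone (cantorProd q) :=
  monotone_nat_of_le_succ fun n => by
    rw [cantorProd_succ]
    exact le_mul_of_one_le_right (cantorProd_pos hq n).le (Nat.one_le_cast.mpr (hq n))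

lemma two_pow_le_cantorProd (hq : ∀ n, 2 ≤ q n) (n : ℕ) : (2 : ℝ) ^ n ≤ cantorProd q n := by
  calc (2 : ℝ) ^ n = ∏ _i ∈ range n, (2 : ℝ) := by rw [prod_const, card_range]
    _ ≤ cantorProd q n :=
      prod_le_prod (fun _ _ => zero_le_two) fun i _ => Nat.ofNat_le_cast.mpr (hq i)

lemma tendsto_cantorProd_atTop (hq : ∀ n, 2 ≤ q n) : Tendsto (cantorProd q) atTop atTop :=
  tendsto_atTop_mono (two_pow_le_cantorProd hq) (tendsto_pow_atTop_atTop_of_one_lt one_lt_two)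

lemma sum_range_sub_one_div_cantorProd (hq : ∀ n, 0 < q n) (N : ℕ) :
    ∑ n ∈ range N, ((q n : ℝ) - 1) / cantorProd q (n + 1) = 1 - 1 / cantorProd q N := by
  have hterm : ∀ n, ((q n : ℝ) - 1) / cantorProd q (n + 1)
      = 1 / cantorProd q n - 1 / cantorProd q (n + 1) := fun n => by
    have := (cantorProd_pos hq n).ne'
    have : (q n : ℝ) ≠ 0 := Nat.cast_ne_zero.mpr (hq n).ne'
    rw [cantorProd_succ]
    field_simp
  rw [sum_congr rfl fun n _ => hterm n, sum_range_sub']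
  simp [cantorProd]

lemma hasSum_sub_one_div_cantorProd (hq : ∀ n, 2 ≤ q n) :
    HasSum (fun n => ((q n : ℝ) - 1) / cantorProd q (n + 1)) 1 := by
  have hq0 : ∀ n, 0 < q n := fun n => zero_lt_two.trans_le (hq n)
  rw [hasSum_iff_tendsto_nat_of_nonneg fun n => div_nonneg
    (sub_nonneg.mpr (Nat.one_le_cast.mpr (hq0 n))) (cantorProd_pos hq0 _).le]
  simp only [sum_range_sub_one_div_cantorProd hq0, one_div]
  simpa using (tendsto_cantorProd_atTop hq).inv_tendsto_atTop.const_sub 1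

lemma hasSum_sub_one_div_cantorProd_nat_add (hq : ∀ n, 2 ≤ q n) (N : ℕ) :
    HasSum (fun n => ((q (n + N) : ℝ) - 1) / cantorProd q (n + N + 1)) (1 / cantorProd q N) := by
  have h := (hasSum_nat_add_iff' N).mpr (hasSum_sub_one_div_cantorProd hq)
  rwa [sum_range_sub_one_div_cantorProd (fun n => zero_lt_two.trans_le (hq n)), sub_sub_cancel] at h

lemma summable_div_cantorProd (hq : ∀ n, 2 ≤ q n) {a : ℕ → ℝ} (ha₀ : ∀ n, 0 ≤ a n)
    (ha : ∀ n, a n ≤ q n - 1) : Summable fun n => a n / cantorProd q (n + 1) := by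
  have hQ : ∀ k, 0 < cantorProd q k := cantorProd_pos fun k => zero_lt_two.trans_le (hq k)
  exact (hasSum_sub_one_div_cantorProd hq).summable.of_nonneg_of_le
    (fun n => div_nonneg (ha₀ n) (hQ _).le) fun n => div_le_div_of_nonneg_right (ha n) (hQ _).le

lemma tsum_div_cantorProd_lt_of_lex (hq : ∀ n, 2 ≤ q n) {a b : ℕ → ℝ} (ha₀ : ∀ k, 0 ≤ a k)
    (ha : ∀ k, a k ≤ q k - 1) (hb₀ : ∀ k, 0 ≤ b k) (hb : ∀ k, b k ≤ q k - 1) {n m : ℕ}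
    (hprefix : ∀ k < n, a k = b k) (hn : a n + 1 ≤ b n) (hnm : n < m) (hm : a m < q m - 1) :
    ∑' k, a k / cantorProd q (k + 1) < ∑' k, b k / cantorProd q (k + 1) := by
  have hQ : ∀ k, 0 < cantorProd q k := cantorProd_pos fun k => zero_lt_two.trans_le (hq k)
  have hsa := summable_div_cantorProd hq ha₀ ha
  have hsb := summable_div_cantorProd hq hb₀ hb
  rw [← hsa.sum_add_tsum_nat_add (n + 1), ← hsb.sum_add_tsum_nat_add (n + 1),
    sum_range_succ, sum_range_succ, sum_congr rfl fun k hk => by rw [hprefix k (mem_range.mp hk)]]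
  have htail_a :
      ∑' k, a (k + (n + 1)) / cantorProd q (k + (n + 1) + 1) < 1 / cantorProd q (n + 1) :=
    hasSum_lt (i := m - (n + 1))
      (fun k => div_le_div_of_nonneg_right (ha _) (hQ _).le)
      (by
        rw [Nat.sub_add_cancel hnm]
        exact div_lt_div_of_pos_right hm (hQ _))
      ((summable_nat_add_iff (n + 1)).mpr hsa).hasSum
      (hasSum_sub_one_div_cantorProd_nat_add hq (n + 1))
  have htail_b : 0 ≤ ∑' k, b (k + (n + 1)) / cantorProd q (k + (n + 1) + 1) :=
    tsum_nonneg fun k => div_nonneg (hb₀ _) (hQ _).le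
  have hdigit :
      a n / cantorProd q (n + 1) + 1 / cantorProd q (n + 1) ≤ b n / cantorProd q (n + 1) := by
    rw [← add_div]
    exact div_le_div_of_nonneg_right hn (hQ _).le
  linarith

end CantorSeries

lemma Nat.floor_add_one_eq_of_sub_one_le {K : Type*} [Field K] [LinearOrder K]
    [IsStrictOrderedRing K] [FloorSemiring K] {t : K} {N : ℕ} (ht : 0 ≤ t) (h₁ : (N : K) - 1 ≤ t)
    (h₂ : t < N) : ⌊t⌋₊ + 1 = N := by
  have hlt : ⌊t⌋₊ < N := (Nat.floor_lt ht).mpr h₂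
  have hgt : N < ⌊t⌋₊ + 2 := by
    have := Nat.lt_floor_add_one t
    exact_mod_cast (by linarith : (N : K) < ⌊t⌋₊ + 2)
  omega

noncomputable def cantorFloor (p : ℕ → ℕ) (x : ℝ) (k : ℕ) : ℕ := ⌊cantorProd p k * Int.fract x⌋₊

section CantorExpansion

variable {p : ℕ → ℕ}

lemma cantorDigit_eq_mod (p : ℕ → ℕ) (x : ℝ) (n : ℕ) :
    cantorDigit p x n = cantorFloor p x (n + 1) % p n := by
  rw [cantorDigit, Int.floor_toNat]
  rfl

lemma cantorFloor_succ_div (x : ℝ) {n : ℕ} (hn : p n ≠ 0) :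
    cantorFloor p x (n + 1) / p n = cantorFloor p x n := by
  rw [cantorFloor, ← Nat.floor_div_natCast, cantorProd_succ, cantorFloor]
  congr 1
  field_simp

lemma cantorDigit_add_mul_cantorFloor (x : ℝ) {n : ℕ} (hn : p n ≠ 0) :
    cantorDigit p x n + p n * cantorFloor p x n = cantorFloor p x (n + 1) := by
  rw [cantorDigit_eq_mod, ← cantorFloor_succ_div x hn, Nat.mod_add_div]

lemma cantorFloor_zero (p : ℕ → ℕ) (x : ℝ) : cantorFloor p x 0 = 0 :=
  Nat.floor_eq_zero.mpr (by simpa [cantorProd] using Int.fract_lt_one x)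

lemma cantorFloor_eq_of_cantorDigit_eq (hp : ∀ n, p n ≠ 0) {x y : ℝ} {n : ℕ}
    (h : ∀ k < n, cantorDigit p x k = cantorDigit p y k) :
    cantorFloor p x n = cantorFloor p y n := by
  induction n with
  | zero => rw [cantorFloor_zero, cantorFloor_zero]
  | succ n ih =>
    rw [← cantorDigit_add_mul_cantorFloor x (hp n), ← cantorDigit_add_mul_cantorFloor y (hp n),
      h n n.lt_succ_self, ih fun k hk => h k (hk.trans n.lt_succ_self)]

lemma cantorFloor_of_mem_Ico {x : ℝ} (hx : x ∈ Set.Ico 0 1) (k : ℕ) :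
    cantorFloor p x k = ⌊cantorProd p k * x⌋₊ := by
  rw [cantorFloor, Int.fract_eq_self.mpr hx]

lemma cantorFloor_mono (hp : ∀ n, 0 < p n) {x y : ℝ} (hx : 0 ≤ x) (hxy : x ≤ y) (hy : y < 1)
    (k : ℕ) : cantorFloor p x k ≤ cantorFloor p y k := by
  rw [cantorFloor_of_mem_Ico ⟨hx, hxy.trans_lt hy⟩, cantorFloor_of_mem_Ico ⟨hx.trans hxy, hy⟩]
  exact Nat.floor_le_floor (mul_le_mul_of_nonneg_left hxy (cantorProd_pos hp k).le)

lemma exists_cantorFloor_lt (hp : ∀ n, 2 ≤ p n) {x y : ℝ} (hx : 0 ≤ x) (hxy : x < y) (hy : y < 1) :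
    ∃ k, cantorFloor p x k < cantorFloor p y k := by
  obtain ⟨k, hk⟩ := ((tendsto_cantorProd_atTop hp).eventually_gt_atTop (y - x)⁻¹).exists
  have hQ := cantorProd_pos (fun n => zero_lt_two.trans_le (hp n)) k
  have hgap : cantorProd p k * x + 1 ≤ cantorProd p k * y := by
    have := (inv_lt_iff_one_lt_mul₀ (sub_pos.mpr hxy)).mp hk
    nlinarith
  refine ⟨k, ?_⟩
  rw [cantorFloor_of_mem_Ico ⟨hx, hxy.trans hy⟩, cantorFloor_of_mem_Ico ⟨hx.trans hxy.le, hy⟩,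
    Nat.lt_iff_add_one_le, ← Nat.floor_add_one (by positivity)]
  exact Nat.floor_le_floor hgap

lemma exists_cantorDigit_lt (hp : ∀ n, 2 ≤ p n) {x y : ℝ} (hx : 0 ≤ x) (hxy : x < y) (hy : y < 1) :
    ∃ n, (∀ k < n, cantorDigit p x k = cantorDigit p y k) ∧
      cantorDigit p x n < cantorDigit p y n := by
  have hp₀ : ∀ n, 0 < p n := fun n => zero_lt_two.trans_le (hp n)
  have hdiff : ∃ n, cantorDigit p x n ≠ cantorDigit p y n := by
    by_contra! h
    obtain ⟨k, hk⟩ := exists_cantorFloor_lt hp hx hxy hy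
    exact hk.ne (cantorFloor_eq_of_cantorDigit_eq (fun n => (hp₀ n).ne') fun k _ => h k)
  classical
  have hprefix : ∀ k < Nat.find hdiff, cantorDigit p x k = cantorDigit p y k :=
    fun k hk => not_not.mp (Nat.find_min hdiff hk)
  refine ⟨Nat.find hdiff, hprefix, lt_of_le_of_ne ?_ (Nat.find_spec hdiff)⟩
  have hmono := cantorFloor_mono hp₀ hx hxy.le hy (Nat.find hdiff + 1)
  rwa [← cantorDigit_add_mul_cantorFloor x (hp₀ _).ne',
    ← cantorDigit_add_mul_cantorFloor y (hp₀ _).ne',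
    cantorFloor_eq_of_cantorDigit_eq (fun n => (hp₀ n).ne') hprefix,
    Nat.add_le_add_iff_right] at hmono

lemma cantorDigit_lt (x : ℝ) {n : ℕ} (hn : 0 < p n) : cantorDigit p x n < p n := by
  rw [cantorDigit_eq_mod]
  exact Nat.mod_lt _ hn

lemma cantorFloor_gap_succ {x : ℝ} {n : ℕ} (hn : cantorDigit p x n + 1 = p n) :
    (cantorFloor p x (n + 1) : ℝ) + 1 - cantorProd p (n + 1) * Int.fract x
      = p n * ((cantorFloor p x n : ℝ) + 1 - cantorProd p n * Int.fract x) := by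
  have hrec : (cantorDigit p x n : ℝ) + p n * cantorFloor p x n = cantorFloor p x (n + 1) := by
    exact_mod_cast cantorDigit_add_mul_cantorFloor x (by omega : p n ≠ 0)
  have hd : (cantorDigit p x n : ℝ) + 1 = p n := by exact_mod_cast hn
  rw [cantorProd_succ]
  linear_combination hd - hrec

/-- Each maximal digit `p m - 1` multiplies the gap `⌊Q x⌋ + 1 - Q x ∈ (0, 1]` by `p m ≥ 2`. -/
lemma exists_cantorDigit_add_one_lt (hp : ∀ n, 2 ≤ p n) (x : ℝ) (n : ℕ) :
    ∃ m, n < m ∧ cantorDigit p x m + 1 < p m := by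
  by_contra! hmax
  set gap : ℕ → ℝ := fun k => (cantorFloor p x k : ℝ) + 1 - cantorProd p k * Int.fract x
  have hQ : ∀ k, 0 ≤ cantorProd p k * Int.fract x := fun k =>
    mul_nonneg (cantorProd_pos (fun n => zero_lt_two.trans_le (hp n)) k).le (Int.fract_nonneg x)
  have hgap_pos : 0 < gap (n + 1) := sub_pos.mpr (Nat.lt_floor_add_one _)
  have hgap_le : ∀ k, gap k ≤ 1 := fun k => by
    have : (cantorFloor p x k : ℝ) ≤ cantorProd p k * Int.fract x := Nat.floor_le (hQ k)
    linarith
  have hgrow : ∀ j, 2 ^ j * gap (n + 1) ≤ gap (n + 1 + j) := by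
    intro j
    induction j with
    | zero => simp
    | succ j ih =>
      have hd : cantorDigit p x (n + 1 + j) + 1 = p (n + 1 + j) :=
        le_antisymm (cantorDigit_lt x (zero_lt_two.trans_le (hp _))) (hmax _ (by omega))
      have h2 : (2 : ℝ) ≤ p (n + 1 + j) := Nat.ofNat_le_cast.mpr (hp _)
      calc 2 ^ (j + 1) * gap (n + 1) = 2 * (2 ^ j * gap (n + 1)) := by ring
        _ ≤ p (n + 1 + j) * gap (n + 1 + j) :=
          mul_le_mul h2 ih (mul_pos (pow_pos two_pos j) hgap_pos).le (by positivity)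
        _ = gap (n + 1 + (j + 1)) := (cantorFloor_gap_succ hd).symm
  obtain ⟨j, hj⟩ := pow_unbounded_of_one_lt (gap (n + 1))⁻¹ one_lt_two
  have := (inv_lt_iff_one_lt_mul₀ hgap_pos).mp hj
  linarith [hgrow j, hgap_le (n + 1 + j)]

lemma cantorFloor_add_one_eq (hp : ∀ n, 0 < p n) {M : ℕ} {x : ℝ}
    (hx : x ∈ Set.Ico (1 - 1 / cantorProd p M) 1) {k : ℕ} (hk : k ≤ M) :
    cantorFloor p x k + 1 = ∏ i ∈ range k, p i := by
  have hQk := cantorProd_pos hp k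
  have hQM := cantorProd_pos hp M
  have hx₀ : 0 ≤ x := (one_sub_one_div_cantorProd_nonneg hp M).trans hx.1
  have hlower : cantorProd p k - 1 ≤ cantorProd p k * x := by
    have : cantorProd p k / cantorProd p M ≤ 1 := (div_le_one hQM).mpr (cantorProd_mono hp hk)
    have : cantorProd p k * (1 - 1 / cantorProd p M) ≤ cantorProd p k * x :=
      mul_le_mul_of_nonneg_left hx.1 hQk.le
    linarith [show cantorProd p k * (1 - 1 / cantorProd p M)
      = cantorProd p k - cantorProd p k / cantorProd p M by ring]
  have hupper : cantorProd p k * x < cantorProd p k := mul_lt_of_lt_one_right hQk hx.2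
  have hcast : cantorProd p k = ((∏ i ∈ range k, p i : ℕ) : ℝ) := by simp [cantorProd]
  rw [cantorFloor_of_mem_Ico ⟨hx₀, hx.2⟩]
  rw [hcast] at hlower hupper hQk ⊢
  exact Nat.floor_add_one_eq_of_sub_one_le (mul_nonneg hQk.le hx₀) hlower hupper

lemma cantorDigit_add_one_eq (hp : ∀ n, 0 < p n) {M : ℕ} {x : ℝ}
    (hx : x ∈ Set.Ico (1 - 1 / cantorProd p M) 1) {n : ℕ} (hn : n < M) :
    cantorDigit p x n + 1 = p n := by
  have hrec := cantorDigit_add_mul_cantorFloor x (hp n).ne'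
  have hn₀ := cantorFloor_add_one_eq hp hx hn.le
  have hn₁ := cantorFloor_add_one_eq hp hx hn
  rw [prod_range_succ, ← hn₀] at hn₁
  nlinarith

end CantorExpansion

lemma min_cantorDigit_eq {p q : ℕ → ℕ} (hp : ∀ n, 0 < p n) (x : ℝ) {n : ℕ} (hpq : p n ≤ q n) :
    min (cantorDigit p x n : ℝ) (q n - 1) = cantorDigit p x n := by
  have hlt : cantorDigit p x n + 1 ≤ q n := (cantorDigit_lt x (hp n)).trans_le hpq
  exact min_eq_left (le_sub_iff_add_le.mpr (by exact_mod_cast hlt))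

theorem strictMonoOn_psiPQ {p q : ℕ → ℕ} (hp : ∀ n, 2 ≤ p n) (hq : ∀ n, 2 ≤ q n) {M : ℕ}
    (hpq : ∀ n, M ≤ n → p n ≤ q n) :
    StrictMonoOn (psiPQ p q) (Set.Ico (1 - 1 / cantorProd p M) 1) := by
  intro x hx y hy hxy
  have hp₀ : ∀ n, 0 < p n := fun n => zero_lt_two.trans_le (hp n)
  have hx₀ : 0 ≤ x := (one_sub_one_div_cantorProd_nonneg hp₀ M).trans hx.1
  obtain ⟨n, hprefix, hlt⟩ := exists_cantorDigit_lt hp hx₀ hxy hy.2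
  have hMn : M ≤ n := by
    by_contra! hnM
    have := cantorDigit_add_one_eq hp₀ hx hnM
    have := cantorDigit_add_one_eq hp₀ hy hnM
    omega
  obtain ⟨m, hnm, hm⟩ := exists_cantorDigit_add_one_lt hp x n
  have hq₁ : ∀ k, (1 : ℝ) ≤ q k := fun k => Nat.one_le_cast.mpr (by have := hq k; omega)
  refine tsum_div_cantorProd_lt_of_lex hq (n := n) (m := m)
    (fun k => le_min (Nat.cast_nonneg _) (sub_nonneg.mpr (hq₁ k))) (fun k => min_le_right _ _)
    (fun k => le_min (Nat.cast_nonneg _) (sub_nonneg.mpr (hq₁ k))) (fun k => min_le_right _ _)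
    (fun k hk => by rw [hprefix k hk]) ?_ hnm ?_
  · rw [min_cantorDigit_eq hp₀ x (hpq n hMn), min_cantorDigit_eq hp₀ y (hpq n hMn)]
    exact_mod_cast hlt
  · rw [min_cantorDigit_eq hp₀ x (hpq m (hMn.trans hnm.le)), lt_sub_iff_add_lt]
    exact_mod_cast hm.trans_le (hpq m (hMn.trans hnm.le))

lemma one_sub_one_div_cantorProd_add_lt_one {p : ℕ → ℕ} (hp : ∀ n, 2 ≤ p n) (M : ℕ) :
    1 - 1 / cantorProd p M + 1 / cantorProd p (M + 1) < 1 := by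
  have hQ := cantorProd_pos (fun n => zero_lt_two.trans_le (hp n)) M
  have hlt : cantorProd p M < cantorProd p (M + 1) := by
    rw [cantorProd_succ]
    exact lt_mul_of_one_lt_right hQ (Nat.one_lt_cast.mpr (hp M))
  linarith [one_div_lt_one_div_of_lt hQ hlt]

theorem stmt12 (p q : ℕ → ℕ) (hp : ∀ n, 2 ≤ p n) (hq : ∀ n, 2 ≤ q n)
    (M : ℕ) (hpq : ∀ n, M ≤ n → p n ≤ q n) :
    StrictMonoOn (psiPQ p q)
      (Set.Icc (∑ n ∈ Finset.range M, ((p n : ℝ) - 1) / ∏ i ∈ Finset.range (n + 1), (p i : ℝ))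
        ((∑ n ∈ Finset.range M, ((p n : ℝ) - 1) / ∏ i ∈ Finset.range (n + 1), (p i : ℝ)) +
          1 / ∏ i ∈ Finset.range (M + 1), (p i : ℝ))) := by
  have hleft : ∑ n ∈ range M, ((p n : ℝ) - 1) / ∏ i ∈ range (n + 1), (p i : ℝ)
      = 1 - 1 / cantorProd p M :=
    sum_range_sub_one_div_cantorProd (fun n => zero_lt_two.trans_le (hp n)) M
  rw [hleft]
  exact (strictMonoOn_psiPQ hp hq hpq).mono
    (Set.Icc_subset_Ico_right (one_sub_one_div_cantorProd_add_lt_one hp M))
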